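/- Suppose the automaton ℳ is alive. Then for every k ≥ 1, the maximum of the block norms of the lifted products over all words of length k equals the maximum of ‖A_σ‖ over all accepted words of length k: max_{σ∈[m]^k} ⦀Φ_σ⦀ = max{‖A_σ‖ : σ ∈ [m]^k, F_σ ≠ 0}. -/

import Mathlib

open Matrix Filter Kronecker

noncomputable section

/-- The product `A_{σ_{k-1}} ⋯ A_{σ_0}` for a word `σ = σ_0 … σ_{k-1}`. -/
def wordProd {m : ℕ} {N : Type*} [Fintype N] [DecidableEq N]
    (A : Fin m → Matrix N N ℝ) {k : ℕ} (σ : Fin k → Fin m) : Matrix N N ℝ :=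
  ((List.ofFn fun i => A (σ i)).reverse).prod

/-- The spectral radius: maximal modulus of a complex eigenvalue. -/
def specRad {N : Type*} [Fintype N] [DecidableEq N] (A : Matrix N N ℝ) : ℝ :=
  ⨆ μ ∈ ((A.map (Complex.ofReal ·)).charpoly.roots).toFinset, ‖μ‖

/-- `ν` is a sub-multiplicative matrix norm. -/
def IsSubmultNorm {N : Type*} [Fintype N] [DecidableEq N]
    (ν : Matrix N N ℝ → ℝ) : Prop :=
  (∀ S, 0 ≤ ν S) ∧ (∀ S, ν S = 0 ↔ S = 0) ∧
  (∀ (c : ℝ) (S), ν (c • S) = |c| * ν S) ∧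
  (∀ S T, ν (S + T) ≤ ν S + ν T) ∧
  (∀ S T, ν (S * T) ≤ ν S * ν T)

/-- Joint spectral radius. -/
def JSR {m : ℕ} {N : Type*} [Fintype N] [DecidableEq N]
    (ν : Matrix N N ℝ → ℝ) (A : Fin m → Matrix N N ℝ) : ℝ :=
  Filter.limsup
    (fun k : ℕ => (⨆ σ : Fin k → Fin m, ν (wordProd A σ)) ^ ((k : ℝ)⁻¹)) Filter.atTop

/-- Generalized spectral radius. -/
def GSR {m : ℕ} {N : Type*} [Fintype N] [DecidableEq N]
    (A : Fin m → Matrix N N ℝ) : ℝ :=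
  Filter.limsup
    (fun k : ℕ => (⨆ σ : Fin k → Fin m, specRad (wordProd A σ)) ^ ((k : ℝ)⁻¹)) Filter.atTop

/-- Constrained joint spectral radius. -/
def CJSR {n m ℓ : ℕ} (ν : Matrix (Fin n) (Fin n) ℝ → ℝ)
    (A : Fin m → Matrix (Fin n) (Fin n) ℝ)
    (F : Fin m → Matrix (Fin ℓ) (Fin ℓ) ℝ) : ℝ :=
  Filter.limsup
    (fun k : ℕ =>
      (⨆ σ : {σ : Fin k → Fin m // wordProd F σ ≠ 0}, ν (wordProd A σ.1)) ^ ((k : ℝ)⁻¹))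
    Filter.atTop

/-- Constrained generalized spectral radius. -/
def CGSR {n m ℓ : ℕ}
    (A : Fin m → Matrix (Fin n) (Fin n) ℝ)
    (F : Fin m → Matrix (Fin ℓ) (Fin ℓ) ℝ) : ℝ :=
  Filter.limsup
    (fun k : ℕ =>
      (⨆ σ : {σ : Fin k → Fin m // wordProd F σ ≠ 0}, specRad (wordProd A σ.1)) ^ ((k : ℝ)⁻¹))
    Filter.atTop

/-- The block norm `⦀S⦀ = max_j Σ_i ‖S_{ij}‖`. -/
def blockNorm {n ℓ : ℕ} (ν : Matrix (Fin n) (Fin n) ℝ → ℝ)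
    (S : Matrix (Fin ℓ × Fin n) (Fin ℓ × Fin n) ℝ) : ℝ :=
  ⨆ j : Fin ℓ, ∑ i : Fin ℓ, ν (Matrix.of fun a b => S (i, a) (j, b))

/-!
Since `Φ_σ = F_σ ⊗ A_σ`, the `(i, j)` block of `Φ_σ` is `(F_σ)_{ij} • A_σ`, so
`⦀Φ_σ⦀ = (max_j Σ_i |(F_σ)_{ij}|) · ‖A_σ‖`. Each column of a transition structure matrix is
zero or a standard basis vector, a property stable under products, so the first factor is `1`
if `F_σ ≠ 0` and `0` otherwise. Taking the maximum over all words gives the claim.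
-/

/-- If no `i` satisfies `p`, both sides are `0`, the value of `⨆` over an empty type in `ℝ`. -/
lemma Real.iSup_ite_eq_iSup_subtype {ι : Type*} [Finite ι] (p : ι → Prop) [DecidablePred p]
    {f : ι → ℝ} (hf : ∀ i, 0 ≤ f i) :
    (⨆ i, if p i then f i else 0) = ⨆ i : {i // p i}, f i := by
  have hsub : 0 ≤ ⨆ i : {i // p i}, f i := Real.iSup_nonneg fun i => hf i
  have hite : 0 ≤ ⨆ i, if p i then f i else 0 :=
    Real.iSup_nonneg fun i => by split_ifs <;> simp [hf]
  apply le_antisymm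
  · refine Real.iSup_le (fun i => ?_) hsub
    split_ifs with hi
    · exact le_ciSup (f := fun i : {i // p i} => f i) (Finite.bddAbove_range _) ⟨i, hi⟩
    · exact hsub
  · refine Real.iSup_le (fun i => ?_) hite
    refine le_ciSup_of_le (Finite.bddAbove_range _) i.1 ?_
    rw [if_pos i.2]

lemma wordProd_eq_prod_map {m : ℕ} {N : Type*} [Fintype N] [DecidableEq N]
    (A : Fin m → Matrix N N ℝ) {k : ℕ} (σ : Fin k → Fin m) :
    wordProd A σ = ((List.ofFn σ).reverse.map A).prod := by
  simp only [wordProd, List.map_reverse, List.map_ofFn, Function.comp_def]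

lemma wordProd_kronecker {m : ℕ} {M N : Type*} [Fintype M] [DecidableEq M] [Fintype N]
    [DecidableEq N] (F : Fin m → Matrix M M ℝ) (A : Fin m → Matrix N N ℝ) {k : ℕ}
    (σ : Fin k → Fin m) :
    wordProd (fun i => F i ⊗ₖ A i) σ = wordProd F σ ⊗ₖ wordProd A σ := by
  simp only [wordProd_eq_prod_map]
  induction (List.ofFn σ).reverse with
  | nil => simp
  | cons a L ih => simp only [List.map_cons, List.prod_cons, ih, mul_kronecker_mul]

lemma blockNorm_kronecker {n ℓ : ℕ} {ν : Matrix (Fin n) (Fin n) ℝ → ℝ}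
    (hν_smul : ∀ (c : ℝ) S, ν (c • S) = |c| * ν S) (G : Matrix (Fin ℓ) (Fin ℓ) ℝ)
    {B : Matrix (Fin n) (Fin n) ℝ} (hB : 0 ≤ ν B) :
    blockNorm ν (G ⊗ₖ B) = (⨆ j, ∑ i, |G i j|) * ν B := by
  have hblock : ∀ i j, (Matrix.of fun a b => (G ⊗ₖ B) (i, a) (j, b)) = G i j • B := by
    intro i j
    ext a b
    simp
  simp only [blockNorm, hblock, hν_smul, ← Finset.sum_mul, Real.iSup_mul_of_nonneg hB]

/-- The transition matrix of a partial map on states. -/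
def IsPartialTransition {ι : Type*} [DecidableEq ι] (G : Matrix ι ι ℝ) : Prop :=
  ∀ t, G.col t = 0 ∨ ∃ s, G.col t = Pi.single s 1

namespace IsPartialTransition

variable {ι : Type*} [DecidableEq ι]

lemma of_entries {G : Matrix ι ι ℝ} (h01 : ∀ s t, G s t = 0 ∨ G s t = 1)
    (hcol : ∀ t s s', G s t ≠ 0 → G s' t ≠ 0 → s = s') : IsPartialTransition G := by
  intro t
  by_cases hzero : G.col t = 0
  · exact Or.inl hzero
  obtain ⟨s, hs⟩ := Function.ne_iff.mp hzero
  refine Or.inr ⟨s, funext fun s' => ?_⟩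
  rcases eq_or_ne s' s with rfl | hs'
  · simpa using (h01 s' t).resolve_left hs
  · rw [Pi.single_eq_of_ne hs']
    by_contra h
    exact hs' (hcol t s' s h hs)

lemma one : IsPartialTransition (1 : Matrix ι ι ℝ) :=
  fun t => Or.inr ⟨t, funext fun s => by simp [col_apply, one_apply, Pi.single_apply]⟩

lemma mul [Fintype ι] {G H : Matrix ι ι ℝ} (hG : IsPartialTransition G)
    (hH : IsPartialTransition H) : IsPartialTransition (G * H) := by
  intro t
  have hcol : (G * H).col t = G *ᵥ H.col t := by
    ext s
    simp [col_apply, mul_apply, mulVec, dotProduct]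
  rcases hH t with h | ⟨r, h⟩
  · exact Or.inl (by rw [hcol, h, mulVec_zero])
  · rw [hcol, h, mulVec_single_one]
    exact hG r

lemma list_prod [Fintype ι] {L : List (Matrix ι ι ℝ)}
    (h : ∀ G ∈ L, IsPartialTransition G) : IsPartialTransition L.prod :=
  List.prod_induction _ (fun _ _ => mul) one h

lemma wordProd [Fintype ι] {m : ℕ} {F : Fin m → Matrix ι ι ℝ}
    (hF : ∀ i, IsPartialTransition (F i)) {k : ℕ} (σ : Fin k → Fin m) :
    IsPartialTransition (_root_.wordProd F σ) := by
  rw [wordProd_eq_prod_map]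
  refine list_prod fun G hG => ?_
  obtain ⟨i, -, rfl⟩ := List.mem_map.mp hG
  exact hF i

lemma iSup_sum_abs_col [Fintype ι] {G : Matrix ι ι ℝ} (hG : IsPartialTransition G) :
    (⨆ j, ∑ i, |G i j|) = if G ≠ 0 then 1 else 0 := by
  have hsum : ∀ j, ∑ i, |G i j| = if G.col j = 0 then 0 else 1 := by
    intro j
    rcases hG j with h | ⟨s, h⟩
    · simp [h, ← col_apply]
    · rw [if_neg (by simp [h])]
      have hGj : ∀ i, G i j = (Pi.single s 1 : ι → ℝ) i := fun i => congrFun h i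
      simp [hGj, Pi.single_apply, apply_ite]
  split_ifs with hzero
  · obtain ⟨j, hj⟩ : ∃ j, G.col j ≠ 0 := by
      by_contra! h
      exact hzero (ext fun s t => congrFun (h t) s)
    refine le_antisymm (Real.iSup_le (fun i => ?_) zero_le_one) ?_
    · rw [hsum]; split_ifs <;> norm_num
    · exact le_ciSup_of_le (Finite.bddAbove_range _) j (by rw [hsum, if_neg hj])
  · simp [not_not.mp hzero]

end IsPartialTransition

theorem stmt8_general    {n m ℓ : ℕ}
    (A : Fin m → Matrix (Fin n) (Fin n) ℝ)
    (ν : Matrix (Fin n) (Fin n) ℝ → ℝ) (hν : IsSubmultNorm ν)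
    (F : Fin m → Matrix (Fin ℓ) (Fin ℓ) ℝ)
    (hF01 : ∀ i s t, F i s t = 0 ∨ F i s t = 1)
    (hFcol : ∀ i t s s', F i s t ≠ 0 → F i s' t ≠ 0 → s = s')
    {k : ℕ} :
    (⨆ σ : Fin k → Fin m, blockNorm ν (wordProd (fun i => F i ⊗ₖ A i) σ)) =
      ⨆ σ : {σ : Fin k → Fin m // wordProd F σ ≠ 0}, ν (wordProd A σ.1) := by
  have hF : ∀ i, IsPartialTransition (F i) := fun i =>
    IsPartialTransition.of_entries (hF01 i) (hFcol i)
  have hΦ : ∀ σ : Fin k → Fin m, blockNorm ν (wordProd (fun i => F i ⊗ₖ A i) σ) =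
      if wordProd F σ ≠ 0 then ν (wordProd A σ) else 0 := fun σ => by
    rw [wordProd_kronecker, blockNorm_kronecker hν.2.2.1 _ (hν.1 _),
      (IsPartialTransition.wordProd hF σ).iSup_sum_abs_col, boole_mul]
  simp only [hΦ]
  exact Real.iSup_ite_eq_iSup_subtype _ fun σ => hν.1 _

theorem stmt8    {n m ℓ : ℕ} (hn : 0 < n) (hm : 0 < m) (hℓ : 0 < ℓ)
    (A : Fin m → Matrix (Fin n) (Fin n) ℝ)
    (ν : Matrix (Fin n) (Fin n) ℝ → ℝ) (hν : IsSubmultNorm ν)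
    (F : Fin m → Matrix (Fin ℓ) (Fin ℓ) ℝ)
    (hF01 : ∀ i s t, F i s t = 0 ∨ F i s t = 1)
    (hFcol : ∀ i t s s', F i s t ≠ 0 → F i s' t ≠ 0 → s = s')
    (halive : ∀ t : Fin ℓ, ∃ i : Fin m, ∃ s : Fin ℓ, F i s t ≠ 0)
    {k : ℕ} (hk : 1 ≤ k) :
    (⨆ σ : Fin k → Fin m, blockNorm ν (wordProd (fun i => F i ⊗ₖ A i) σ)) =
      ⨆ σ : {σ : Fin k → Fin m // wordProd F σ ≠ 0}, ν (wordProd A σ.1) :=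
  stmt8_general A ν hν F hF01 hFcol
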